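/- arXiv:0911.1828 — 2 statements merged into one kernel-verified Lean document; each statement's English description precedes it below -/
import Mathlib

section
/- Let Γ be a distance-regular graph. For any completely regular code C in Γ with characteristic vector x, the outer distribution module 𝔸x of C is closed under entrywise (Hadamard) multiplication of vectors. -/
open Finset Matrix

variable {V : Type*}

/-- `G` is a distance-regular graph with valency `k`, diameter `D`,
and intersection numbers `b i`, `c i`. -/
def IsDRG [Fintype V] (G : SimpleGraph V) [DecidableRel G.Adj]
    (k D : ℕ) (b c : ℕ → ℕ) : Prop :=
  G.Connected ∧ (∀ v, G.degree v = k) ∧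
    (∀ x y : V, G.dist x y ≤ D) ∧ (∃ x y : V, G.dist x y = D) ∧
    ∀ i ≤ D, ∀ x y : V, G.dist x y = i →
      ((Finset.univ.filter fun z => G.Adj y z ∧ G.dist x z = i - 1).card = c i ∧
       (Finset.univ.filter fun z => G.Adj y z ∧ G.dist x z = i + 1).card = b i)

/-- the distance from a vertex `v` to the code `C` -/
noncomputable def codeDist (G : SimpleGraph V) (C : Finset V) (v : V) : ℕ :=
  sInf {n | ∃ y ∈ C, G.dist v y = n}

/-- the characteristic vector of a code -/
def charVec [DecidableEq V] (C : Finset V) : V → ℂ :=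
  fun v => if v ∈ C then 1 else 0

/-- the characteristic vector of the `i`-th cell `C_i` of the distance partition -/
noncomputable def cellVec (G : SimpleGraph V) (C : Finset V) (i : ℕ) : V → ℂ :=
  fun v => if codeDist G C v = i then 1 else 0

/-- the `i`-th cell `C_i` of the distance partition, as a finset -/
noncomputable def cellFinset [Fintype V] (G : SimpleGraph V) (C : Finset V) (i : ℕ) : Finset V :=
  Finset.univ.filter fun v => codeDist G C v = i

/-- the number of neighbours of `v` lying in the `j`-th cell `C_j` -/
noncomputable def nbrsInCell [Fintype V] (G : SimpleGraph V) [DecidableRel G.Adj]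
    (C : Finset V) (j : ℕ) (v : V) : ℕ :=
  (Finset.univ.filter fun z => G.Adj v z ∧ codeDist G C z = j).card

/-- `C` is a completely regular code with covering radius `ρ` and
intersection numbers `γ i, α i, β i`. -/
def IsCRC [Fintype V] (G : SimpleGraph V) [DecidableRel G.Adj]
    (C : Finset V) (ρ : ℕ) (γ α β : ℕ → ℕ) : Prop :=
  C.Nonempty ∧ (∀ v, codeDist G C v ≤ ρ) ∧ (∃ v, codeDist G C v = ρ) ∧
    (∀ i, 1 ≤ i → i ≤ ρ → ∀ v, codeDist G C v = i → nbrsInCell G C (i - 1) v = γ i) ∧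
    (∀ i ≤ ρ, ∀ v, codeDist G C v = i → nbrsInCell G C i v = α i) ∧
    (∀ i ≤ ρ, ∀ v, codeDist G C v = i → nbrsInCell G C (i + 1) v = β i)

/-- the outer distribution module `𝔸x` of the code `C`, where `𝔸` is the
Bose-Mesner algebra (the algebra generated by the adjacency matrix) -/
noncomputable def outerModule [Fintype V] [DecidableEq V] (G : SimpleGraph V)
    [DecidableRel G.Adj] (C : Finset V) : Submodule ℂ (V → ℂ) :=
  Submodule.span ℂ {w | ∃ M ∈ Algebra.adjoin ℂ {G.adjMatrix ℂ}, w = M *ᵥ charVec C}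

/-- the tridiagonal quotient matrix `U` of a completely regular code -/
def quotientMatrix (F : Type*) [Semiring F] (γ α β : ℕ → ℕ) (ρ : ℕ) :
    Matrix (Fin (ρ + 1)) (Fin (ρ + 1)) F :=
  Matrix.of fun i j =>
    if (i : ℕ) = (j : ℕ) + 1 then (γ (i : ℕ) : F)
    else if (i : ℕ) = (j : ℕ) then (α (i : ℕ) : F)
    else if (j : ℕ) = (i : ℕ) + 1 then (β (i : ℕ) : F)
    else 0

/-- `θ` lists the distinct eigenvalues of `A` and `E j` is the orthogonal
projection onto the eigenspace of `θ j` (the primitive idempotents). -/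
def PrimIdem [Fintype V] [DecidableEq V] (A : Matrix V V ℂ) (D : ℕ)
    (θ : Fin (D + 1) → ℝ) (E : Fin (D + 1) → Matrix V V ℂ) : Prop :=
  Function.Injective θ ∧ (∀ j, E j * E j = E j) ∧ (∀ j, (E j)ᴴ = E j) ∧
    (∀ j, A * E j = (θ j : ℂ) • E j) ∧ (∑ j, E j = 1) ∧ (∀ j, E j ≠ 0)

/-- `q` are the Krein parameters of the primitive idempotents `E`. -/
def KreinRel [Fintype V] (D : ℕ) (E : Fin (D + 1) → Matrix V V ℂ)
    (q : Fin (D + 1) → Fin (D + 1) → Fin (D + 1) → ℝ) : Prop :=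
  ∀ i j, Matrix.hadamard (E i) (E j) = (Fintype.card V : ℂ)⁻¹ • ∑ l, (q i j l : ℂ) • E l

/-- the Krein parameters satisfy the `Q`-polynomial condition with respect to the
given ordering of the primitive idempotents -/
def QPolyKrein (D : ℕ) (q : Fin (D + 1) → Fin (D + 1) → Fin (D + 1) → ℝ) : Prop :=
  ∀ i j l : Fin (D + 1),
    (¬(((i : ℤ) - (j : ℤ)).natAbs ≤ (l : ℕ) ∧ (l : ℕ) ≤ (i : ℕ) + (j : ℕ)) → q i j l = 0) ∧
    (((l : ℕ) = ((i : ℤ) - (j : ℤ)).natAbs ∨ (l : ℕ) = (i : ℕ) + (j : ℕ)) → q i j l ≠ 0)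

/-- a matrix is irreducible tridiagonal if all entries at distance more than one from
the diagonal vanish and all sub- and super-diagonal entries are nonzero -/
def IrredTridiag {n : ℕ} {F : Type*} [Zero F] (M : Matrix (Fin n) (Fin n) F) : Prop :=
  (∀ i j : Fin n, 1 < (((i : ℕ) : ℤ) - ((j : ℕ) : ℤ)).natAbs → M i j = 0) ∧
  (∀ i j : Fin n, (((i : ℕ) : ℤ) - ((j : ℕ) : ℤ)).natAbs = 1 → M i j ≠ 0)

/-- `C` is a Leonard completely regular code with respect to the (nontrivial)
eigenvalue `θ t`: for some ordering `σ` of the basis `ℬ = {E_j x ≠ 0}` of the outer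
distribution module, the matrix representing `y ↦ (E t x) ∘ y` is irreducible
tridiagonal. -/
def IsLeonardWrt [Fintype V] [DecidableEq V] (D ρ : ℕ)
    (E : Fin (D + 1) → Matrix V V ℂ) (C : Finset V) (t : Fin (D + 1)) : Prop :=
  E t *ᵥ charVec C ≠ 0 ∧
    ∃ σ : Fin (ρ + 1) → Fin (D + 1), Function.Injective σ ∧
      (∀ j : Fin (D + 1), E j *ᵥ charVec C ≠ 0 ↔ j ∈ Set.range σ) ∧
      ∃ M : Matrix (Fin (ρ + 1)) (Fin (ρ + 1)) ℂ, IrredTridiag M ∧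
        ∀ j, (E t *ᵥ charVec C) * (E (σ j) *ᵥ charVec C) =
          ∑ l, M l j • (E (σ l) *ᵥ charVec C)

/-- `C` is a Leonard completely regular code: it is Leonard with respect to some
nontrivial eigenvalue. -/
def IsLeonard [Fintype V] [DecidableEq V] (D ρ : ℕ)
    (E : Fin (D + 1) → Matrix V V ℂ) (C : Finset V) : Prop :=
  ∃ t : Fin (D + 1), t ≠ 0 ∧ IsLeonardWrt D ρ E C t

/-- `C` is a `Q`-polynomial completely regular code with respect to the eigenvalue
`θ t`: there is an ordering `Spec C = {θ 0, θ (σ 1), …, θ (σ ρ)}` with `σ 1 = t`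
such that the entrywise `p`-th power of `u = E t x` lies in
`V_{σ 0} + ⋯ + V_{σ p}` for all `0 ≤ p ≤ ρ`. -/
def IsQPolyCodeWrt [Fintype V] [DecidableEq V] (G : SimpleGraph V) [DecidableRel G.Adj]
    (D ρ : ℕ) (θ : Fin (D + 1) → ℝ) (E : Fin (D + 1) → Matrix V V ℂ)
    (γ α β : ℕ → ℕ) (C : Finset V) (t : Fin (D + 1)) : Prop :=
  ∃ σ : Fin (ρ + 1) → Fin (D + 1), σ 0 = 0 ∧ Function.Injective σ ∧ σ 1 = t ∧
    spectrum ℂ (quotientMatrix ℂ γ α β ρ) = Set.range (fun j => (θ (σ j) : ℂ)) ∧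
    ∀ p : Fin (ρ + 1), (fun v => (E t *ᵥ charVec C) v ^ (p : ℕ)) ∈
      ⨆ (j : Fin (ρ + 1)) (_ : j ≤ p),
        Module.End.eigenspace (Matrix.mulVecLin (G.adjMatrix ℂ)) ((θ (σ j) : ℂ))

/-- `C` is a `Q`-polynomial completely regular code. -/
def IsQPolyCode [Fintype V] [DecidableEq V] (G : SimpleGraph V) [DecidableRel G.Adj]
    (D ρ : ℕ) (θ : Fin (D + 1) → ℝ) (E : Fin (D + 1) → Matrix V V ℂ)
    (γ α β : ℕ → ℕ) (C : Finset V) : Prop :=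
  ∃ t : Fin (D + 1), IsQPolyCodeWrt G D ρ θ E γ α β C t

/-- a translation graph on an abelian group: adjacency is invariant under translation -/
def IsTranslationGraph {X : Type*} [AddCommGroup X] (G : SimpleGraph X) : Prop :=
  ∀ x y z : X, G.Adj x y → G.Adj (x + z) (y + z)

/-- the coset graph of an additive code `C`: cosets `C'` and `C''` are adjacent if
`Γ` has an edge with one end in `C'` and the other in `C''` -/
def cosetGraph {X : Type*} [AddCommGroup X] (G : SimpleGraph X) (C : AddSubgroup X) :
    SimpleGraph (X ⧸ C) where
  Adj a b := a ≠ b ∧ ∃ x y : X,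
    QuotientAddGroup.mk x = a ∧ QuotientAddGroup.mk y = b ∧ G.Adj x y
  symm := ⟨fun a b ⟨hne, x, y, hx, hy, h⟩ => ⟨hne.symm, y, x, hy, hx, h.symm⟩⟩
  loopless := ⟨fun a ⟨hne, _⟩ => hne rfl⟩

/-- `G` is a `Q`-polynomial distance-regular graph: it is distance-regular and
admits an ordering of its primitive idempotents whose Krein parameters satisfy
the `Q`-polynomial condition -/
def IsQPolyDRG {W : Type*} [Fintype W] [DecidableEq W]
    (G : SimpleGraph W) [DecidableRel G.Adj] : Prop :=
  ∃ (k D : ℕ) (b c : ℕ → ℕ), IsDRG G k D b c ∧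
    ∃ (θ : Fin (D + 1) → ℝ) (E : Fin (D + 1) → Matrix W W ℂ)
      (q : Fin (D + 1) → Fin (D + 1) → Fin (D + 1) → ℝ),
      θ 0 = k ∧ PrimIdem (G.adjMatrix ℂ) D θ E ∧ KreinRel D E q ∧ QPolyKrein D q


/-!
For a completely regular code the partition `C₀, …, C_ρ` is equitable, so `A` maps the span of
the cell vectors `χ(C_i)` into itself, acting by the quotient matrix; as `χ(C₀) = x`, this span
contains `𝔸x`. Conversely, `γ_{i+1} ≠ 0` lets the three-term recurrence
`A χ(C_i) = β_{i-1} χ(C_{i-1}) + α_i χ(C_i) + γ_{i+1} χ(C_{i+1})` be solved for `χ(C_{i+1})`,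
so every cell vector lies in `𝔸x`. Hence `𝔸x` is spanned by the `χ(C_i)`, which are orthogonal
idempotents for the entrywise product.
-/

section CodeDist

variable (G : SimpleGraph V) (C : Finset V)

lemma exists_mem_dist_eq_codeDist (hC : C.Nonempty) (v : V) :
    ∃ y ∈ C, G.dist v y = codeDist G C v := by
  obtain ⟨y, hy⟩ := hC
  exact Nat.sInf_mem (s := {n | ∃ y ∈ C, G.dist v y = n}) ⟨G.dist v y, y, hy, rfl⟩

lemma codeDist_le_dist {y : V} (hy : y ∈ C) (v : V) : codeDist G C v ≤ G.dist v y :=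
  Nat.sInf_le ⟨y, hy, rfl⟩

variable {G} (hconn : G.Connected) {C} (hC : C.Nonempty)
include hconn hC

lemma codeDist_eq_zero_iff (v : V) : codeDist G C v = 0 ↔ v ∈ C := by
  refine ⟨fun h => ?_, fun h => ?_⟩
  · obtain ⟨y, hy, hd⟩ := exists_mem_dist_eq_codeDist G C hC v
    rw [h, hconn.dist_eq_zero_iff] at hd
    exact hd ▸ hy
  · simpa using codeDist_le_dist G C h v

lemma codeDist_le_codeDist_add_one_of_adj {u v : V} (h : G.Adj u v) :
    codeDist G C u ≤ codeDist G C v + 1 := by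
  obtain ⟨y, hy, hd⟩ := exists_mem_dist_eq_codeDist G C hC v
  calc codeDist G C u ≤ G.dist u y := codeDist_le_dist G C hy u
    _ ≤ G.dist u v + G.dist v y := hconn.dist_triangle
    _ = codeDist G C v + 1 := by rw [SimpleGraph.dist_eq_one_iff_adj.mpr h, hd, add_comm]

lemma exists_adj_codeDist_eq_pred {v : V} (hv : codeDist G C v ≠ 0) :
    ∃ u, G.Adj v u ∧ codeDist G C u = codeDist G C v - 1 := by
  obtain ⟨y, hy, hd⟩ := exists_mem_dist_eq_codeDist G C hC v
  obtain ⟨p, hp⟩ := hconn.exists_walk_length_eq_dist v y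
  cases p with
  | nil => exact absurd (hd ▸ hp.symm) hv
  | @cons _ u _ hadj q =>
    refine ⟨u, hadj, ?_⟩
    have hu : codeDist G C u ≤ q.length :=
      (codeDist_le_dist G C hy u).trans (SimpleGraph.dist_le q)
    have hvu := codeDist_le_codeDist_add_one_of_adj hconn hC hadj
    simp only [SimpleGraph.Walk.length_cons] at hp
    omega

lemma exists_codeDist_eq {ρ i : ℕ} (hmax : ∃ v, codeDist G C v = ρ) (hi : i ≤ ρ) :
    ∃ v, codeDist G C v = i := by
  induction hi using Nat.decreasingInduction with
  | self => exact hmax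
  | of_succ n _ ih =>
    obtain ⟨w, hw⟩ := ih
    obtain ⟨u, -, hu⟩ := exists_adj_codeDist_eq_pred hconn hC (v := w) (by omega)
    exact ⟨u, by omega⟩

end CodeDist

section Cells

variable (G : SimpleGraph V) (C : Finset V)

lemma cellVec_eq_zero_of_lt {ρ : ℕ} (hle : ∀ v, codeDist G C v ≤ ρ) {i : ℕ} (hi : ρ < i) :
    cellVec G C i = 0 := by
  funext v
  have := hle v
  simp only [cellVec, Pi.zero_apply, ite_eq_right_iff]
  omega

lemma charVec_eq_cellVec_zero [DecidableEq V] (hconn : G.Connected) (hC : C.Nonempty) :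
    charVec C = cellVec G C 0 := by
  funext v
  simp [charVec, cellVec, codeDist_eq_zero_iff hconn hC v]

lemma cellVec_mul_cellVec (i j : ℕ) :
    cellVec G C i * cellVec G C j = if i = j then cellVec G C i else 0 := by
  funext v
  by_cases hij : i = j <;> by_cases hi : codeDist G C v = i <;>
    simp [cellVec, hij, hi]

lemma mem_span_cellVec_of_eq_comp_codeDist [Fintype V] {s : Set ℕ} {f : ℕ → ℂ}
    (hf : ∀ i ∉ s, f i = 0) {w : V → ℂ} (hw : ∀ v, w v = f (codeDist G C v)) :
    w ∈ Submodule.span ℂ (cellVec G C '' s) := by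
  have hsum : w = ∑ i ∈ Finset.univ.image (codeDist G C), f i • cellVec G C i := by
    funext v
    simp [cellVec, hw v, Finset.sum_apply]
  rw [hsum]
  refine Submodule.sum_mem _ fun i _ => ?_
  by_cases hi : i ∈ s
  · exact Submodule.smul_mem _ _ (Submodule.subset_span ⟨i, hi, rfl⟩)
  · simp [hf i hi]

end Cells

/-- The `(i, j)` entry of `quotientMatrix`, indexed by all of `ℕ`. -/
def quotientEntry (γ α β : ℕ → ℕ) (i j : ℕ) : ℕ :=
  if i = j + 1 then γ i else if i = j then α i else if j = i + 1 then β i else 0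

section Equitable

variable [Fintype V] {G : SimpleGraph V} [DecidableRel G.Adj] {C : Finset V}

lemma adjMatrix_mulVec_cellVec_apply (j : ℕ) (v : V) :
    (G.adjMatrix ℂ *ᵥ cellVec G C j) v = nbrsInCell G C j v := by
  rw [SimpleGraph.adjMatrix_mulVec_apply, nbrsInCell]
  unfold cellVec
  rw [Finset.sum_boole]
  congr 2
  ext z
  simp

lemma nbrsInCell_eq_zero (hconn : G.Connected) (hC : C.Nonempty) {j : ℕ} {v : V}
    (h₁ : codeDist G C v ≠ j) (h₂ : codeDist G C v + 1 ≠ j) (h₃ : codeDist G C v ≠ j + 1) :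
    nbrsInCell G C j v = 0 := by
  rw [nbrsInCell, Finset.card_eq_zero, Finset.filter_eq_empty_iff]
  rintro z - ⟨hadj, rfl⟩
  have := codeDist_le_codeDist_add_one_of_adj hconn hC hadj
  have := codeDist_le_codeDist_add_one_of_adj hconn hC hadj.symm
  omega

variable {ρ : ℕ} {γ α β : ℕ → ℕ}

lemma IsCRC.nbrsInCell_eq (hCRC : IsCRC G C ρ γ α β) (hconn : G.Connected) (j : ℕ) (v : V) :
    nbrsInCell G C j v = quotientEntry γ α β (codeDist G C v) j := by
  obtain ⟨hC, hle, -, hγ, hα, hβ⟩ := hCRC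
  have hv := hle v
  unfold quotientEntry
  split_ifs with h₁ h₂ h₃
  · simpa [h₁] using hγ _ (by omega) hv v rfl
  · simpa [h₂] using hα _ hv v rfl
  · simpa [h₃] using hβ _ hv v rfl
  · exact nbrsInCell_eq_zero hconn hC h₂ (Ne.symm h₃) h₁

lemma IsCRC.gamma_ne_zero (hCRC : IsCRC G C ρ γ α β) (hconn : G.Connected) {i : ℕ}
    (h₀ : i ≠ 0) (hi : i ≤ ρ) : γ i ≠ 0 := by
  obtain ⟨hC, -, hmax, hγ, -⟩ := hCRC
  obtain ⟨v, hv⟩ := exists_codeDist_eq hconn hC hmax hi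
  obtain ⟨u, hadj, hu⟩ := exists_adj_codeDist_eq_pred hconn hC (v := v) (by omega)
  rw [← hγ i (by omega) hi v hv]
  exact Finset.card_ne_zero.mpr ⟨u, by simp [hadj, hu, hv]⟩

lemma IsCRC.adjMatrix_mulVec_mem_span_cellVec (hCRC : IsCRC G C ρ γ α β) (hconn : G.Connected)
    {w : V → ℂ}
    (hw : w ∈ Submodule.span ℂ (Set.range (cellVec G C))) :
    G.adjMatrix ℂ *ᵥ w ∈ Submodule.span ℂ (Set.range (cellVec G C)) := by
  suffices Submodule.span ℂ (Set.range (cellVec G C)) ≤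
      (Submodule.span ℂ (Set.range (cellVec G C))).comap (G.adjMatrix ℂ).mulVecLin from this hw
  refine Submodule.span_le.mpr (Set.range_subset_iff.mpr fun j => ?_)
  rw [← Set.image_univ]
  refine mem_span_cellVec_of_eq_comp_codeDist G C (f := fun i => quotientEntry γ α β i j)
    (by simp) fun v => ?_
  rw [Matrix.mulVecLin_apply, adjMatrix_mulVec_cellVec_apply, hCRC.nbrsInCell_eq hconn]

end Equitable

lemma Matrix.mulVec_mem_of_mem_adjoin {n R : Type*} [Fintype n] [DecidableEq n] [CommRing R]
    {A M : Matrix n n R} {S : Submodule R (n → R)} (hS : ∀ w ∈ S, A *ᵥ w ∈ S)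
    (hM : M ∈ Algebra.adjoin R {A}) {w : n → R} (hw : w ∈ S) : M *ᵥ w ∈ S := by
  induction hM using Algebra.adjoin_induction generalizing w with
  | mem _ h => exact Set.mem_singleton_iff.mp h ▸ hS w hw
  | algebraMap c =>
    simpa [Algebra.algebraMap_eq_smul_one, Matrix.smul_mulVec] using S.smul_mem c hw
  | add _ _ _ _ h₁ h₂ => simpa [Matrix.add_mulVec] using add_mem (h₁ hw) (h₂ hw)
  | mul _ _ _ _ h₁ h₂ => simpa [Matrix.mulVec_mulVec] using h₁ (h₂ hw)

section OuterModule

variable [Fintype V] [DecidableEq V] (G : SimpleGraph V) [DecidableRel G.Adj] (C : Finset V)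

lemma charVec_mem_outerModule : charVec C ∈ outerModule G C :=
  Submodule.subset_span ⟨1, one_mem _, (Matrix.one_mulVec _).symm⟩

lemma adjMatrix_mulVec_mem_outerModule {w : V → ℂ} (hw : w ∈ outerModule G C) :
    G.adjMatrix ℂ *ᵥ w ∈ outerModule G C := by
  induction hw using Submodule.span_induction with
  | mem a ha =>
    obtain ⟨M, hM, rfl⟩ := ha
    exact Submodule.subset_span
      ⟨_, mul_mem (Algebra.self_mem_adjoin_singleton ℂ _) hM, Matrix.mulVec_mulVec _ _ _⟩
  | zero => simp
  | add a b _ _ ha hb => simpa [Matrix.mulVec_add] using add_mem ha hb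
  | smul c a _ ha => simpa [Matrix.mulVec_smul] using Submodule.smul_mem _ c ha

lemma outerModule_le {S : Submodule ℂ (V → ℂ)} (hx : charVec C ∈ S)
    (hS : ∀ w ∈ S, G.adjMatrix ℂ *ᵥ w ∈ S) : outerModule G C ≤ S :=
  Submodule.span_le.mpr fun _ ⟨_, hM, hw⟩ => hw ▸ Matrix.mulVec_mem_of_mem_adjoin hS hM hx

variable {G C} {ρ : ℕ} {γ α β : ℕ → ℕ} (hCRC : IsCRC G C ρ γ α β) (hconn : G.Connected)
include hCRC hconn

lemma IsCRC.cellVec_mem_outerModule (i : ℕ) : cellVec G C i ∈ outerModule G C := by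
  induction i using Nat.strong_induction_on with
  | _ i ih =>
  rcases i with _ | n
  · exact charVec_eq_cellVec_zero G C hconn hCRC.1 ▸ charVec_mem_outerModule G C
  by_cases hn : ρ < n + 1
  · simp [cellVec_eq_zero_of_lt G C hCRC.2.1 hn]
  have hlower : Submodule.span ℂ (cellVec G C '' Set.Iic n) ≤ outerModule G C :=
    Submodule.span_le.mpr (Set.image_subset_iff.mpr fun l hl => ih l (Nat.lt_succ_of_le hl))
  -- `A χ(C_n) - γ_{n+1} χ(C_{n+1})` is supported on `C₀ ∪ ⋯ ∪ C_n`.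
  have hrest : G.adjMatrix ℂ *ᵥ cellVec G C n - (γ (n + 1) : ℂ) • cellVec G C (n + 1) ∈
      outerModule G C := by
    refine hlower (mem_span_cellVec_of_eq_comp_codeDist G C
      (f := fun i => quotientEntry γ α β i n - if i = n + 1 then (γ (n + 1) : ℂ) else 0)
      (fun i hi => ?_) fun v => ?_)
    · simp only [Set.mem_Iic, not_le] at hi
      by_cases h : i = n + 1
      · simp [quotientEntry, h]
      · have : quotientEntry γ α β i n = 0 := by unfold quotientEntry; split_ifs <;> omega
        simp [this, h]
    · rw [Pi.sub_apply, adjMatrix_mulVec_cellVec_apply, hCRC.nbrsInCell_eq hconn]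
      simp [cellVec]
  have hγ : (γ (n + 1) : ℂ) ≠ 0 :=
    Nat.cast_ne_zero.mpr (hCRC.gamma_ne_zero hconn n.succ_ne_zero (by omega))
  have hsmul := sub_mem (adjMatrix_mulVec_mem_outerModule G C (ih n n.lt_succ_self)) hrest
  rw [sub_sub_cancel] at hsmul
  exact (Submodule.smul_mem_iff _ hγ).mp hsmul

lemma IsCRC.outerModule_eq_span_cellVec :
    outerModule G C = Submodule.span ℂ (Set.range (cellVec G C)) :=
  le_antisymm
    (outerModule_le G C
      (charVec_eq_cellVec_zero G C hconn hCRC.1 ▸ Submodule.subset_span ⟨0, rfl⟩)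
      fun _ => hCRC.adjMatrix_mulVec_mem_span_cellVec hconn)
    (Submodule.span_le.mpr (Set.range_subset_iff.mpr (hCRC.cellVec_mem_outerModule hconn)))

end OuterModule

lemma span_cellVec_mul_le (G : SimpleGraph V) (C : Finset V) :
    Submodule.span ℂ (Set.range (cellVec G C)) * Submodule.span ℂ (Set.range (cellVec G C)) ≤
      Submodule.span ℂ (Set.range (cellVec G C)) := by
  rw [Submodule.span_mul_span]
  refine Submodule.span_le.mpr ?_
  rintro _ ⟨_, ⟨i, rfl⟩, _, ⟨j, rfl⟩, rfl⟩
  dsimp only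
  rw [cellVec_mul_cellVec]
  split_ifs
  · exact Submodule.subset_span ⟨i, rfl⟩
  · exact zero_mem _

theorem stmt3 {V : Type*} [Fintype V] [DecidableEq V]
    (G : SimpleGraph V) [DecidableRel G.Adj] (k D : ℕ) (b c : ℕ → ℕ)
    (hG : IsDRG G k D b c)
    (C : Finset V) (ρ : ℕ) (γ α β : ℕ → ℕ)
    (hC : IsCRC G C ρ γ α β) :
    ∀ u v : V → ℂ, u ∈ outerModule G C → v ∈ outerModule G C →
      u * v ∈ outerModule G C := by
  intro u v hu hv
  rw [hC.outerModule_eq_span_cellVec hG.1] at hu hv ⊢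
  exact span_cellVec_mul_le G C (Submodule.mul_mem_mul hu hv)
end

section
/- (Lloyd's Theorem.) Let Γ be a distance-regular graph and C a completely regular code in Γ with covering radius ρ. Then the quotient matrix U of Γ with respect to C has exactly ρ + 1 distinct eigenvalues, namely {θ_j : j ∈ S*(C) ∪ {0}}; in particular, every eigenvalue of U is an eigenvalue of Γ. -/
open Finset Matrix

variable {V : Type*}

/-!
Let `S` be the matrix whose columns are the characteristic vectors of the cells `C_0, …, C_ρ`.
Complete regularity says exactly that `A S = S U`, and since the cells are nonempty, `S` is
injective; so the eigenvalues of `U` are those of `A` on the column space `W` of `S`. As `U` is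
tridiagonal with nonzero subdiagonal `γ`, `W` is the smallest `A`-invariant subspace containing
`x = χ_C`. Each `E_j` is a polynomial in `A` (Lagrange interpolation at the `θ_l`), so the nonzero
`E_j x` lie in `W`, span it because `x = ∑ E_j x`, and are independent eigenvectors: the
eigenvalues of `A` on `W` are the `θ_j` with `E_j x ≠ 0`, and there are `dim W = ρ + 1` of them.
Finally the all-ones vector lies in `W` with eigenvalue `k = θ_0`, so `E_0 x ≠ 0`.
-/

namespace Matrix

open Polynomial

section

variable {K n m : Type*} [Field K] [Fintype n] [Fintype m]
  {A : Matrix n n K} {S : Matrix n m K} {U : Matrix m m K} {μ : K}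

theorem aeval_mul_of_mul_eq_smul [DecidableEq n] {M : Matrix n n K} (h : A * M = μ • M)
    (p : K[X]) : aeval A p * M = p.eval μ • M := by
  induction p using Polynomial.induction_on' with
  | add p q hp hq => rw [map_add, add_mul, hp, hq, eval_add, add_smul]
  | monomial k a =>
    have hpow : A ^ k * M = μ ^ k • M := by
      induction k with
      | zero => simp
      | succ k ih => rw [pow_succ, mul_assoc, h, Matrix.mul_smul, ih, smul_smul, pow_succ, mul_comm]
    rw [aeval_monomial, Algebra.algebraMap_eq_smul_one, smul_mul_assoc, one_mul,
      smul_mul_assoc, hpow, smul_smul, eval_monomial]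

theorem aeval_mulVec_mem [DecidableEq n] {Q : Submodule K (n → K)}
    (hQ : ∀ v ∈ Q, A *ᵥ v ∈ Q) {x : n → K} (hx : x ∈ Q) (p : K[X]) :
    aeval A p *ᵥ x ∈ Q := by
  induction p using Polynomial.induction_on' with
  | add p q hp hq => rw [map_add, add_mulVec]; exact Q.add_mem hp hq
  | monomial k a =>
    have hpow : A ^ k *ᵥ x ∈ Q := by
      induction k with
      | zero => simpa using hx
      | succ k ih => rw [pow_succ', ← mulVec_mulVec]; exact hQ _ ih
    rw [aeval_monomial, Algebra.algebraMap_eq_smul_one, smul_mul_assoc, one_mul, smul_mulVec]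
    exact Q.smul_mem a hpow

theorem mem_spectrum_iff_exists_mulVec_eq_smul [DecidableEq m] :
    μ ∈ spectrum K U ↔ ∃ u, u ≠ 0 ∧ U *ᵥ u = μ • u := by
  rw [← spectrum_toLin', ← Module.End.hasEigenvalue_iff_mem_spectrum]
  refine ⟨fun h => ?_, fun ⟨u, hu, hUu⟩ => Module.End.hasEigenvalue_of_hasEigenvector
    ⟨Module.End.mem_eigenspace_iff.mpr hUu, hu⟩⟩
  obtain ⟨u, hu⟩ := h.exists_hasEigenvector
  exact ⟨u, hu.2, Module.End.mem_eigenspace_iff.mp hu.1⟩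

theorem mulVec_mem_range_of_mul_eq_mul (hAS : A * S = S * U) {w : n → K}
    (hw : w ∈ LinearMap.range S.mulVecLin) : A *ᵥ w ∈ LinearMap.range S.mulVecLin := by
  obtain ⟨u, rfl⟩ := hw
  exact ⟨U *ᵥ u, by simp only [mulVecLin_apply, mulVec_mulVec, hAS]⟩

theorem mem_spectrum_iff_of_mul_eq_mul [DecidableEq m] (hS : Function.Injective S.mulVec)
    (hAS : A * S = S * U) :
    μ ∈ spectrum K U ↔
      ∃ w ∈ LinearMap.range S.mulVecLin, w ≠ 0 ∧ A *ᵥ w = μ • w := by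
  have hSU : ∀ u, A *ᵥ (S *ᵥ u) = S *ᵥ (U *ᵥ u) := fun u => by
    rw [mulVec_mulVec, mulVec_mulVec, hAS]
  rw [mem_spectrum_iff_exists_mulVec_eq_smul]
  constructor
  · rintro ⟨u, hu, hUu⟩
    refine ⟨S *ᵥ u, ⟨u, rfl⟩, fun h => hu (hS (by rw [h, mulVec_zero])), ?_⟩
    rw [hSU, hUu, mulVec_smul]
  · rintro ⟨_, ⟨u, rfl⟩, hw, hAw⟩
    refine ⟨u, fun h => hw (by simp [h]), hS ?_⟩
    rw [← hSU, mulVec_smul]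
    exact hAw

theorem mulVec_col_of_mul_eq_mul (hAS : A * S = S * U) (j : m) :
    A *ᵥ S.col j = ∑ l, U l j • S.col l := by
  ext v
  have := congrFun (congrFun hAS v) j
  simp only [mul_apply] at this
  simp [mulVec, dotProduct, this, Finset.sum_apply, mul_comm]

/-- `U` is lower Hessenberg with nonzero subdiagonal, so each column of `S` is solved for from
`A` applied to the previous one. -/
theorem col_mem_of_mul_eq_mul {ρ : ℕ} {S : Matrix n (Fin (ρ + 1)) K}
    {U : Matrix (Fin (ρ + 1)) (Fin (ρ + 1)) K} (hAS : A * S = S * U)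
    (hU : ∀ i j : Fin (ρ + 1), (j : ℕ) + 1 < i → U i j = 0)
    (hUsub : ∀ i j : Fin (ρ + 1), (i : ℕ) = j + 1 → U i j ≠ 0)
    {Q : Submodule K (n → K)} (hQ : ∀ v ∈ Q, A *ᵥ v ∈ Q) (h0 : S.col 0 ∈ Q)
    (i : Fin (ρ + 1)) : S.col i ∈ Q := by
  suffices ∀ N, ∀ i : Fin (ρ + 1), (i : ℕ) ≤ N → S.col i ∈ Q from this i i le_rfl
  intro N
  induction N with
  | zero => intro i hi; rwa [show i = 0 from Fin.ext (by simpa using hi)]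
  | succ N ih =>
    intro i hi
    rcases Nat.lt_or_ge (i : ℕ) (N + 1) with hlt | hge
    · exact ih i (by omega)
    set j : Fin (ρ + 1) := ⟨N, by omega⟩
    have hij : (i : ℕ) = j + 1 := by simp [j]; omega
    have hrest : ∑ l ∈ Finset.univ.erase i, U l j • S.col l ∈ Q :=
      Q.sum_mem fun l hl => by
        rcases Nat.lt_or_ge (l : ℕ) (N + 1) with hl' | hl'
        · exact Q.smul_mem _ (ih l (by omega))
        · have : (j : ℕ) + 1 < l := by
            have := Fin.val_ne_of_ne (Finset.ne_of_mem_erase hl); simp [j]; omega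
          rw [hU l j this, zero_smul]; exact Q.zero_mem
    have hi_mem : U i j • S.col i ∈ Q := by
      have h := Q.sub_mem (hQ _ (ih j le_rfl)) hrest
      rwa [mulVec_col_of_mul_eq_mul hAS, ← Finset.add_sum_erase _ _ (Finset.mem_univ i),
        add_sub_cancel_right] at h
    exact (Q.smul_mem_iff (hUsub i j hij)).mp hi_mem

end

section

variable {K n m ι : Type*} [Field K] [Fintype n] [DecidableEq n] [Fintype m] [Fintype ι]
  [DecidableEq ι]

structure IsSpectralDecomposition (A : Matrix n n K) (θ : ι → K) (E : ι → Matrix n n K) :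
    Prop where
  injective : Function.Injective θ
  mul_eq_smul : ∀ j, A * E j = θ j • E j
  sum_eq_one : ∑ j, E j = 1

structure IsCyclicSubspace (A : Matrix n n K) (x : n → K) (W : Submodule K (n → K)) :
    Prop where
  mem : x ∈ W
  mulVec_mem : ∀ v ∈ W, A *ᵥ v ∈ W
  le : ∀ Q : Submodule K (n → K), (∀ v ∈ Q, A *ᵥ v ∈ Q) → x ∈ Q → W ≤ Q

namespace IsSpectralDecomposition

variable {A : Matrix n n K} {θ : ι → K} {E : ι → Matrix n n K}
  (hd : IsSpectralDecomposition A θ E) {x w : n → K} {μ : K} {W : Submodule K (n → K)}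
include hd

theorem aeval_lagrangeBasis (j : ι) : aeval A (Lagrange.basis univ θ j) = E j := by
  calc aeval A (Lagrange.basis univ θ j)
      = ∑ l, aeval A (Lagrange.basis univ θ j) * E l := by
        rw [← Finset.mul_sum, hd.sum_eq_one, mul_one]
    _ = ∑ l, (Lagrange.basis univ θ j).eval (θ l) • E l :=
        Finset.sum_congr rfl fun l _ => aeval_mul_of_mul_eq_smul (hd.mul_eq_smul l) _
    _ = E j := by
      rw [Finset.sum_eq_single j (fun l _ hl => by
          rw [Lagrange.eval_basis_of_ne (Ne.symm hl) (Finset.mem_univ l), zero_smul])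
        (fun h => absurd (Finset.mem_univ j) h),
        Lagrange.eval_basis_self hd.injective.injOn (Finset.mem_univ j), one_smul]

theorem mul_eq_smul' (j : ι) : E j * A = θ j • E j := by
  rw [← hd.mul_eq_smul, ← hd.aeval_lagrangeBasis]
  simpa [aeval_X] using ((Commute.all (Lagrange.basis univ θ j) X).map (aeval A)).eq

omit [DecidableEq ι] in
theorem sum_mulVec (v : n → K) : ∑ j, E j *ᵥ v = v := by
  rw [← Matrix.sum_mulVec, hd.sum_eq_one, one_mulVec]

theorem mulVec_mem {Q : Submodule K (n → K)} (hQ : ∀ v ∈ Q, A *ᵥ v ∈ Q) (hx : x ∈ Q)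
    (j : ι) : E j *ᵥ x ∈ Q := by
  rw [← hd.aeval_lagrangeBasis]
  exact aeval_mulVec_mem hQ hx _

theorem mulVec_eq_zero (hW : IsCyclicSubspace A x W) {j : ι} (hj : E j *ᵥ x = 0)
    (hw : w ∈ W) : E j *ᵥ w = 0 := by
  refine LinearMap.mem_ker.mp (hW.le (LinearMap.ker (E j).mulVecLin) (fun v hv => ?_) hj hw)
  rw [LinearMap.mem_ker, mulVecLin_apply] at hv ⊢
  rw [mulVec_mulVec, hd.mul_eq_smul', smul_mulVec, hv, smul_zero]

theorem exists_mulVec_ne_zero_eq (hW : IsCyclicSubspace A x W) (hw : w ∈ W) (hw0 : w ≠ 0)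
    (hAw : A *ᵥ w = μ • w) : ∃ j, E j *ᵥ x ≠ 0 ∧ θ j = μ := by
  obtain ⟨j, -, hj⟩ : ∃ j ∈ univ, E j *ᵥ w ≠ 0 := by
    by_contra! h
    exact hw0 (by rw [← hd.sum_mulVec w, Finset.sum_eq_zero h])
  have hθμ : θ j • E j *ᵥ w = μ • E j *ᵥ w := by
    rw [← smul_mulVec, ← hd.mul_eq_smul', ← mulVec_mulVec, hAw, mulVec_smul]
  exact ⟨j, fun hj0 => hj (hd.mulVec_eq_zero hW hj0 hw), smul_left_injective K hj hθμ⟩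

omit [DecidableEq ι] in
theorem mulVec_mulVec_eq_smul (j : ι) (v : n → K) :
    A *ᵥ (E j *ᵥ v) = θ j • E j *ᵥ v := by
  rw [mulVec_mulVec, hd.mul_eq_smul, smul_mulVec]

omit [DecidableEq ι] in
theorem linearIndependent_mulVec (x : n → K) :
    LinearIndependent K fun j : {j // E j *ᵥ x ≠ 0} => E j *ᵥ x :=
  Module.End.eigenvectors_linearIndependent' A.mulVecLin (fun j : {j // E j *ᵥ x ≠ 0} => θ j)
    (hd.injective.comp Subtype.val_injective) _
    fun j => ⟨Module.End.mem_eigenspace_iff.mpr (hd.mulVec_mulVec_eq_smul j x), j.2⟩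

theorem span_mulVec_eq (hW : IsCyclicSubspace A x W) :
    Submodule.span K (Set.range fun j : {j // E j *ᵥ x ≠ 0} => E j *ᵥ x) = W := by
  refine le_antisymm (Submodule.span_le.mpr ?_) (hW.le _ (fun v hv => ?_) ?_)
  · rintro _ ⟨j, rfl⟩
    exact hd.mulVec_mem hW.mulVec_mem hW.mem j
  · induction hv using Submodule.span_induction with
    | mem v hv =>
      obtain ⟨j, rfl⟩ := hv
      rw [hd.mulVec_mulVec_eq_smul]
      exact Submodule.smul_mem _ _ (Submodule.subset_span ⟨j, rfl⟩)
    | zero => simp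
    | add v v' _ _ hv hv' => rw [mulVec_add]; exact Submodule.add_mem _ hv hv'
    | smul a v _ hv => rw [mulVec_smul]; exact Submodule.smul_mem _ a hv
  · have hsum : ∑ j, E j *ᵥ x ∈
        Submodule.span K (Set.range fun j : {j // E j *ᵥ x ≠ 0} => E j *ᵥ x) :=
      Submodule.sum_mem _ fun j _ => by
        by_cases hj : E j *ᵥ x = 0
        · rw [hj]; exact Submodule.zero_mem _
        · exact Submodule.subset_span ⟨⟨j, hj⟩, rfl⟩
    rwa [hd.sum_mulVec] at hsum

theorem finrank_eq_ncard (hW : IsCyclicSubspace A x W) :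
    Module.finrank K W = {j | E j *ᵥ x ≠ 0}.ncard := by
  classical
  rw [← hd.span_mulVec_eq hW, finrank_span_eq_card (hd.linearIndependent_mulVec x),
    ← Nat.card_eq_fintype_card]
  rfl

variable {S : Matrix n m K} {U : Matrix m m K}

theorem spectrum_eq_image [DecidableEq m] (hS : Function.Injective S.mulVec) (hAS : A * S = S * U)
    (hW : IsCyclicSubspace A x (LinearMap.range S.mulVecLin)) :
    spectrum K U = θ '' {j | E j *ᵥ x ≠ 0} := by
  ext μ
  rw [mem_spectrum_iff_of_mul_eq_mul hS hAS]
  constructor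
  · rintro ⟨w, hw, hw0, hAw⟩
    exact hd.exists_mulVec_ne_zero_eq hW hw hw0 hAw
  · rintro ⟨j, hj, rfl⟩
    exact ⟨E j *ᵥ x, hd.mulVec_mem hW.mulVec_mem hW.mem j, hj, hd.mulVec_mulVec_eq_smul j x⟩

theorem ncard_mulVec_ne_zero (hS : Function.Injective S.mulVec)
    (hW : IsCyclicSubspace A x (LinearMap.range S.mulVecLin)) :
    {j | E j *ᵥ x ≠ 0}.ncard = Fintype.card m := by
  rw [← hd.finrank_eq_ncard hW, LinearMap.finrank_range_of_inj hS,
    Module.finrank_fintype_fun_eq_card]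

end IsSpectralDecomposition

end

end Matrix

namespace SimpleGraph

variable {G : SimpleGraph V} {C : Finset V} {v z : V}

theorem exists_mem_dist_eq_codeDist (hC : C.Nonempty) (v : V) :
    ∃ y ∈ C, G.dist v y = codeDist G C v :=
  Nat.sInf_mem (s := {n | ∃ y ∈ C, G.dist v y = n}) ⟨_, hC.choose, hC.choose_spec, rfl⟩

theorem codeDist_le_dist {y : V} (hy : y ∈ C) (v : V) : codeDist G C v ≤ G.dist v y :=
  Nat.sInf_le ⟨y, hy, rfl⟩

theorem codeDist_eq_zero_iff (hconn : G.Connected) (hC : C.Nonempty) :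
    codeDist G C v = 0 ↔ v ∈ C := by
  refine ⟨fun h => ?_, fun hv => Nat.le_zero.mp (by simpa using codeDist_le_dist hv v)⟩
  obtain ⟨y, hy, hd⟩ := exists_mem_dist_eq_codeDist (G := G) hC v
  rw [h, hconn.dist_eq_zero_iff] at hd
  exact hd ▸ hy

theorem Adj.codeDist_le (hC : C.Nonempty) (h : G.Adj v z) :
    codeDist G C z ≤ codeDist G C v + 1 := by
  obtain ⟨y, hy, hd⟩ := exists_mem_dist_eq_codeDist (G := G) hC v
  have := codeDist_le_dist (G := G) hy z
  rw [dist_comm (u := v)] at hd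
  rw [dist_comm (u := z)] at this
  rcases h.diff_dist_adj (u := y) with h' | h' | h' <;> omega

theorem exists_adj_codeDist_eq (hC : C.Nonempty) {i : ℕ} (h : codeDist G C v = i + 1) :
    ∃ z, G.Adj v z ∧ codeDist G C z = i := by
  obtain ⟨y, hy, hd⟩ := exists_mem_dist_eq_codeDist (G := G) hC v
  rw [h] at hd
  obtain ⟨p, hp⟩ := exists_walk_of_dist_ne_zero (by omega : G.dist v y ≠ 0)
  cases p with
  | nil => simp at hd
  | @cons _ z _ hadj q =>
    have := (codeDist_le_dist hy z).trans (dist_le q)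
    have := hadj.symm.codeDist_le hC
    simp only [Walk.length_cons] at hp
    exact ⟨z, hadj, by omega⟩

theorem exists_codeDist_eq (hC : C.Nonempty) {ρ i : ℕ} (hρ : codeDist G C v = ρ)
    (hi : i ≤ ρ) : ∃ z, codeDist G C z = i := by
  induction ρ generalizing v with
  | zero => exact ⟨v, by omega⟩
  | succ ρ ih =>
    rcases hi.eq_or_lt with rfl | hlt
    · exact ⟨v, hρ⟩
    obtain ⟨z, -, hz⟩ := exists_adj_codeDist_eq hC hρ
    exact ih hz (by omega)

end SimpleGraph

section

variable {G : SimpleGraph V} {C : Finset V} {ρ : ℕ} {v : V}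

noncomputable def cellMatrix (G : SimpleGraph V) (C : Finset V) (ρ : ℕ) :
    Matrix V (Fin (ρ + 1)) ℂ :=
  Matrix.of fun v i => cellVec G C i v

theorem cellMatrix_mulVec_apply {i : Fin (ρ + 1)} (hv : codeDist G C v = i)
    (u : Fin (ρ + 1) → ℂ) : (cellMatrix G C ρ *ᵥ u) v = u i := by
  rw [mulVec, dotProduct, Finset.sum_eq_single i (fun l _ hl => by
    simp [cellMatrix, cellVec, hv, Fin.val_ne_of_ne hl.symm]) (by simp)]
  simp [cellMatrix, cellVec, hv]

theorem cellMatrix_mul_apply {m : Type*} {i : Fin (ρ + 1)} (hv : codeDist G C v = i)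
    (M : Matrix (Fin (ρ + 1)) m ℂ) (j : m) : (cellMatrix G C ρ * M) v j = M i j :=
  cellMatrix_mulVec_apply hv fun l => M l j

theorem cellMatrix_col_zero [DecidableEq V] (hconn : G.Connected) (hC : C.Nonempty) :
    (cellMatrix G C ρ).col 0 = charVec C := by
  ext v
  simp [cellMatrix, cellVec, charVec, SimpleGraph.codeDist_eq_zero_iff hconn hC]

theorem adjMatrix_mul_cellMatrix_apply [Fintype V] [DecidableRel G.Adj] (j : Fin (ρ + 1)) :
    (G.adjMatrix ℂ * cellMatrix G C ρ) v j = nbrsInCell G C j v := by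
  simp only [mul_apply, cellMatrix, cellVec, of_apply, SimpleGraph.adjMatrix_apply, nbrsInCell,
    mul_boole, ← ite_and, Finset.sum_boole, and_comm]

theorem quotientMatrix_apply_eq_zero {F : Type*} [Semiring F] {γ α β : ℕ → ℕ}
    {i j : Fin (ρ + 1)} (h : (j : ℕ) + 1 < i) : quotientMatrix F γ α β ρ i j = 0 := by
  simp only [quotientMatrix, of_apply]
  split_ifs <;> first | rfl | omega

namespace IsCRC

variable [Fintype V] [DecidableRel G.Adj] {γ α β : ℕ → ℕ} (hC : IsCRC G C ρ γ α β)
include hC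

theorem codeDist_lt_succ (v : V) : codeDist G C v < ρ + 1 :=
  Nat.lt_succ_of_le (hC.2.1 v)

theorem exists_codeDist_eq {i : ℕ} (hi : i ≤ ρ) : ∃ v, codeDist G C v = i :=
  let ⟨_, hv⟩ := hC.2.2.1
  SimpleGraph.exists_codeDist_eq hC.1 hv hi

theorem nbrsInCell_eq_s6 {i : Fin (ρ + 1)} (hv : codeDist G C v = i) (j : Fin (ρ + 1)) :
    (nbrsInCell G C j v : ℂ) = quotientMatrix ℂ γ α β ρ i j := by
  obtain ⟨hne, -, -, hγ, hα, hβ⟩ := hC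
  have hi := i.is_le
  simp only [quotientMatrix, of_apply]
  split_ifs with h1 h2 h3
  · rw [← hγ i (by omega) hi v hv, show (i : ℕ) - 1 = j by omega]
  · rw [h2, hα j (h2 ▸ hi) v (h2 ▸ hv)]
  · rw [h3, hβ i hi v hv]
  · rw [Nat.cast_eq_zero, nbrsInCell, Finset.card_eq_zero, Finset.filter_eq_empty_iff]
    rintro z - ⟨hadj, hz⟩
    have := hadj.codeDist_le hne
    have := hadj.symm.codeDist_le hne
    omega

theorem adjMatrix_mul_cellMatrix :
    G.adjMatrix ℂ * cellMatrix G C ρ = cellMatrix G C ρ * quotientMatrix ℂ γ α β ρ := by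
  ext v j
  have hv : codeDist G C v = (⟨codeDist G C v, hC.codeDist_lt_succ v⟩ : Fin (ρ + 1)) := rfl
  rw [adjMatrix_mul_cellMatrix_apply, cellMatrix_mul_apply hv, hC.nbrsInCell_eq_s6 hv]

theorem cellMatrix_mulVec_injective : Function.Injective (cellMatrix G C ρ).mulVec := by
  intro u u' h
  funext i
  obtain ⟨v, hv⟩ := hC.exists_codeDist_eq i.is_le
  simpa [cellMatrix_mulVec_apply hv] using congrFun h v

theorem cellMatrix_mulVec_const (a : ℂ) :
    cellMatrix G C ρ *ᵥ Function.const _ a = Function.const V a := by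
  funext v
  exact cellMatrix_mulVec_apply (i := ⟨codeDist G C v, hC.codeDist_lt_succ v⟩) rfl _

theorem quotientMatrix_ne_zero_of_eq_succ {i j : Fin (ρ + 1)} (h : (i : ℕ) = j + 1) :
    quotientMatrix ℂ γ α β ρ i j ≠ 0 := by
  obtain ⟨v, hv⟩ := hC.exists_codeDist_eq i.is_le
  obtain ⟨z, hadj, hz⟩ := SimpleGraph.exists_adj_codeDist_eq hC.1 (hv.trans h)
  rw [← hC.nbrsInCell_eq_s6 hv, Nat.cast_ne_zero]
  exact Finset.card_ne_zero_of_mem (Finset.mem_filter.mpr ⟨Finset.mem_univ z, hadj, hz⟩)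

theorem isCyclicSubspace_range_cellMatrix [DecidableEq V] (hconn : G.Connected) :
    (G.adjMatrix ℂ).IsCyclicSubspace (charVec C)
      (LinearMap.range (cellMatrix G C ρ).mulVecLin) := by
  have hx : (cellMatrix G C ρ).col 0 = charVec C := cellMatrix_col_zero hconn hC.1
  have hAS := hC.adjMatrix_mul_cellMatrix
  refine ⟨⟨Pi.single 0 1, by rw [← hx, mulVecLin_apply, mulVec_single_one]⟩,
    fun _ => mulVec_mem_range_of_mul_eq_mul hAS, fun Q hQ hxQ => ?_⟩
  rw [range_mulVecLin, Submodule.span_le]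
  rintro _ ⟨i, rfl⟩
  exact col_mem_of_mul_eq_mul hAS (fun _ _ => quotientMatrix_apply_eq_zero)
    (fun _ _ => hC.quotientMatrix_ne_zero_of_eq_succ) hQ (hx ▸ hxQ) i

end IsCRC

end

theorem stmt6 {V : Type*} [Fintype V] [DecidableEq V]
    (G : SimpleGraph V) [DecidableRel G.Adj] (k D : ℕ) (b c : ℕ → ℕ)
    (hG : IsDRG G k D b c)
    (θ : Fin (D + 1) → ℝ) (hθ0 : θ 0 = k)
    (E : Fin (D + 1) → Matrix V V ℂ) (hPI : PrimIdem (G.adjMatrix ℂ) D θ E)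
    (C : Finset V) (ρ : ℕ) (γ α β : ℕ → ℕ)
    (hC : IsCRC G C ρ γ α β) :
    spectrum ℂ (quotientMatrix ℂ γ α β ρ) =
        (fun j : Fin (D + 1) => (θ j : ℂ)) ''
          ({0} ∪ {j : Fin (D + 1) | j ≠ 0 ∧ E j *ᵥ charVec C ≠ 0}) ∧
      (spectrum ℂ (quotientMatrix ℂ γ α β ρ)).ncard = ρ + 1 := by
  obtain ⟨hconn, hdeg, -⟩ := hG
  obtain ⟨hθ, -, -, hAE, hE, -⟩ := hPI
  have hd : (G.adjMatrix ℂ).IsSpectralDecomposition (fun j => (θ j : ℂ)) E :=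
    ⟨Complex.ofReal_injective.comp hθ, hAE, hE⟩
  have hS := hC.cellMatrix_mulVec_injective
  have hW := hC.isCyclicSubspace_range_cellMatrix hconn
  have hspec := hd.spectrum_eq_image hS hC.adjMatrix_mul_cellMatrix hW
  have h0 : E 0 *ᵥ charVec C ≠ 0 := by
    obtain ⟨v, -⟩ := hC.1
    obtain ⟨j, hj, hjk⟩ := hd.exists_mulVec_ne_zero_eq (μ := k) hW
      ⟨Function.const _ 1, hC.cellMatrix_mulVec_const 1⟩ (fun h => one_ne_zero (congrFun h v))
      (by ext; simp [hdeg])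
    obtain rfl : j = 0 := hd.injective (hjk.trans (by rw [hθ0]; rfl))
    exact hj
  have hT : ({0} ∪ {j | j ≠ 0 ∧ E j *ᵥ charVec C ≠ 0} : Set (Fin (D + 1))) =
      {j | E j *ᵥ charVec C ≠ 0} := by
    ext j
    by_cases hj : j = 0 <;> simp [hj, h0]
  rw [hT, hspec, Set.ncard_image_of_injective _ hd.injective, hd.ncard_mulVec_ne_zero hS hW,
    Fintype.card_fin]
  exact ⟨rfl, rfl⟩
end
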